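/- Let N ≥ 7 and 4 ≤ d ≤ N - 3. Then W(P_{N,d,⌊d/2⌋}) < W(N_{N,d}); in fact moving the unique vertex of N_{N,d} at distance 2 from the longest path one step closer to the path decreases the total distance sum, since it decreases N - 2 pairwise distances by 1 and increases exactly one pairwise distance by 1. -/

import Mathlib

/-- The Wiener index of a finite graph: the sum of pairwise distances
(each unordered pair counted once). -/
noncomputable def wiener {V : Type*} [Fintype V] (G : SimpleGraph V) : ℕ :=
  (∑ i : V, ∑ j : V, G.dist i j) / 2


/-- The caterpillar `P_{N,d,i}`: a path of length `d` on vertices `0,…,d`, with a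
bouquet of `N - d - 1` leaves (vertices `d+1,…,N-1`) attached to the `i`-th internal
vertex (vertex `i`) of the path. -/
def pathBouquet (N d i : ℕ) : SimpleGraph (Fin N) :=
  SimpleGraph.fromRel (fun a b =>
    ((a : ℕ) + 1 = (b : ℕ) ∧ (b : ℕ) ≤ d) ∨ ((a : ℕ) = i ∧ d < (b : ℕ)))

/-- The tree `N_{N,d}`: obtained from `P_{N-1,d,⌊d/2⌋}` (path `0,…,d` with bouquet
leaves `d+1,…,N-2` attached to vertex `⌊d/2⌋`) by attaching the extra vertex `N-1`
to the bouquet leaf `d+1`. -/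
def treeNnd (N d : ℕ) : SimpleGraph (Fin N) :=
  SimpleGraph.fromRel (fun a b =>
    ((a : ℕ) + 1 = (b : ℕ) ∧ (b : ℕ) ≤ d) ∨
    ((a : ℕ) = d / 2 ∧ d < (b : ℕ) ∧ (b : ℕ) ≤ N - 2) ∨
    ((a : ℕ) = d + 1 ∧ (b : ℕ) = N - 1))

/-!
A function `f` with `f u = 0` that grows by at most one along every edge and that, at every
`v ≠ u`, drops strictly at some neighbour of `v` equals `G.dist u`. This gives closed forms for
both trees. In `P_{N,d,i}` the distance is the gap between the spine positions of the two
vertices (a leaf sits over `i`) plus one for each endpoint that is a leaf. `N_{N,d}` is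
`P_{N-1,d,⌊d/2⌋}` with the pendant vertex `N - 1` hung on the leaf `d + 1`, so its distances are
those of `P_{N-1,d,⌊d/2⌋}` after collapsing `N - 1` onto `d + 1`, plus one per endpoint equal to
`N - 1`. The two trees agree away from `N - 1`; in the row of `N - 1`, hanging it on the hub
instead shortens the distances to the `N - 2` vertices other than `d + 1` by one and lengthens
the distance to `d + 1` by one, so the Wiener index drops by `N - 3`.
-/

namespace SimpleGraph

variable {V : Type*} {G : SimpleGraph V}

theorem Walk.le_add_length_of_lipschitz (f : V → ℕ)
    (hf : ∀ a b, G.Adj a b → f b ≤ f a + 1) {u v : V} (p : G.Walk u v) :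
    f v ≤ f u + p.length := by
  induction p with
  | nil => simp
  | cons hadj _ ih => have := hf _ _ hadj; simp only [Walk.length_cons]; omega

theorem exists_walk_length_le_of_descent (u : V) (f : V → ℕ)
    (hf : ∀ v, v ≠ u → ∃ w, G.Adj w v ∧ f w < f v) (v : V) :
    ∃ p : G.Walk u v, p.length ≤ f v := by
  induction hn : f v using Nat.strong_induction_on generalizing v with
  | _ n ih =>
    by_cases hv : v = u
    · subst hv; exact ⟨.nil, by simp⟩
    obtain ⟨w, hwv, hw⟩ := hf v hv
    obtain ⟨p, hp⟩ := ih (f w) (hn ▸ hw) w rfl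
    exact ⟨p.concat hwv, by rw [Walk.length_concat]; omega⟩

theorem dist_eq_of_lipschitz_of_descent {u : V} (f : V → ℕ) (hu : f u = 0)
    (hlip : ∀ a b, G.Adj a b → f b ≤ f a + 1)
    (hdesc : ∀ v, v ≠ u → ∃ w, G.Adj w v ∧ f w < f v) (v : V) :
    G.dist u v = f v := by
  obtain ⟨p, hp⟩ := exists_walk_length_le_of_descent u f hdesc v
  obtain ⟨q, hq⟩ := p.reachable.exists_walk_length_eq_dist
  have := q.le_add_length_of_lipschitz f hlip
  have := dist_le p
  omega

theorem dist_fromRel_fin_eq_of_lipschitz_of_descent {N : ℕ} (E : ℕ → ℕ → Prop)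
    (f : ℕ → ℕ → ℕ) (hself : ∀ x, f x x = 0)
    (hlip : ∀ x a b, E a b → f x b ≤ f x a + 1 ∧ f x a ≤ f x b + 1)
    (hdesc : ∀ x y, x < N → y < N → y ≠ x →
      ∃ w < N, w ≠ y ∧ (E w y ∨ E y w) ∧ f x w < f x y)
    (u v : Fin N) :
    (fromRel fun a b : Fin N => E a b).dist u v = f u v := by
  refine dist_eq_of_lipschitz_of_descent (u := u) (fun v => f u v) (hself u)
    (fun a b hab => ?_) (fun v hvu => ?_) v
  · rcases ((fromRel_adj _ _ _).1 hab).2 with hab | hab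
    exacts [(hlip u a b hab).1, (hlip u b a hab).2]
  · obtain ⟨w, hwN, hwv, hadj, hw⟩ :=
      hdesc u v u.isLt v.isLt (fun h => hvu (Fin.ext h))
    exact ⟨⟨w, hwN⟩, (fromRel_adj _ _ _).2 ⟨fun h => hwv (Fin.val_eq_of_eq h), hadj⟩,
      hw⟩

end SimpleGraph

theorem Fin.sum_sum_eq_castSucc_add_last_of_symm {β : Type*} [AddCommMonoid β] {n : ℕ}
    (f : Fin (n + 1) → Fin (n + 1) → β) (hf : ∀ i j, f i j = f j i) :
    ∑ i, ∑ j, f i j = ∑ i : Fin n, ∑ j : Fin n, f i.castSucc j.castSucc +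
      2 • ∑ j : Fin n, f (Fin.last n) j.castSucc + f (Fin.last n) (Fin.last n) := by
  simp only [Fin.sum_univ_castSucc, Finset.sum_add_distrib, hf _ (Fin.last n), two_smul]
  abel

def PathBouquetEdge (d i a b : ℕ) : Prop := (a + 1 = b ∧ b ≤ d) ∨ (a = i ∧ d < b)

def TreeNndEdge (N d a b : ℕ) : Prop :=
  (a + 1 = b ∧ b ≤ d) ∨ (a = d / 2 ∧ d < b ∧ b ≤ N - 2) ∨ (a = d + 1 ∧ b = N - 1)

def spinePos (d i x : ℕ) : ℕ := if x ≤ d then x else i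

def pathBouquetDist (d i x y : ℕ) : ℕ :=
  if x = y then 0
  else Nat.dist (spinePos d i x) (spinePos d i y) +
    (if x ≤ d then 0 else 1) + (if y ≤ d then 0 else 1)

section PathBouquet

variable {d i x y : ℕ}

theorem pathBouquetDist_self : pathBouquetDist d i x x = 0 := by
  simp [pathBouquetDist]

theorem pathBouquetDist_lipschitz (hi : i ≤ d) {a b : ℕ} (hab : PathBouquetEdge d i a b) :
    pathBouquetDist d i x b ≤ pathBouquetDist d i x a + 1 ∧
      pathBouquetDist d i x a ≤ pathBouquetDist d i x b + 1 := by
  unfold PathBouquetEdge at hab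
  unfold pathBouquetDist spinePos Nat.dist
  split_ifs <;> omega

theorem pathBouquetDist_descent {N : ℕ} (hi : i ≤ d) (hx : x < N) (hy : y < N) (hyx : y ≠ x) :
    ∃ w < N, w ≠ y ∧ (PathBouquetEdge d i w y ∨ PathBouquetEdge d i y w) ∧
      pathBouquetDist d i x w < pathBouquetDist d i x y := by
  have hsp : spinePos d i x ≤ x := by unfold spinePos; split_ifs <;> omega
  unfold PathBouquetEdge pathBouquetDist Nat.dist
  by_cases hyd : y ≤ d
  · rcases lt_trichotomy (spinePos d i x) y with hlt | heq | hgt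
    · refine ⟨y - 1, by omega, ?_⟩
      unfold spinePos at *; split_ifs at * <;> omega
    · refine ⟨x, hx, ?_⟩
      unfold spinePos at *; split_ifs at * <;> omega
    · refine ⟨y + 1, by omega, ?_⟩
      unfold spinePos at *; split_ifs at * <;> omega
  · refine ⟨i, by omega, ?_⟩
    unfold spinePos at *; split_ifs at * <;> omega

theorem pathBouquetDist_congr_leaf {x' : ℕ} (hx : d < x) (hx' : d < x') (hy : y ≠ x)
    (hy' : y ≠ x') :
    pathBouquetDist d i x y = pathBouquetDist d i x' y := by
  unfold pathBouquetDist spinePos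
  split_ifs <;> omega

theorem pathBouquet_dist {N : ℕ} (hi : i ≤ d) (u v : Fin N) :
    (pathBouquet N d i).dist u v = pathBouquetDist d i u v :=
  SimpleGraph.dist_fromRel_fin_eq_of_lipschitz_of_descent (PathBouquetEdge d i)
    (pathBouquetDist d i)
    (fun _ => pathBouquetDist_self) (fun _ _ _ => pathBouquetDist_lipschitz hi)
    (fun _ _ hx hy hyx => pathBouquetDist_descent hi hx hy hyx) u v

end PathBouquet

def treeNndAnchor (N d x : ℕ) : ℕ := if x = N - 1 then d + 1 else x

def treeNndDist (N d x y : ℕ) : ℕ :=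
  if x = y then 0
  else pathBouquetDist d (d / 2) (treeNndAnchor N d x) (treeNndAnchor N d y) +
    (if x = N - 1 then 1 else 0) + (if y = N - 1 then 1 else 0)

section TreeNnd

variable {N d x y : ℕ}

theorem treeNndDist_of_ne_last (hy : y ≠ N - 1) :
    treeNndDist N d x y =
      pathBouquetDist d (d / 2) (treeNndAnchor N d x) y + (if x = N - 1 then 1 else 0) := by
  unfold treeNndDist treeNndAnchor
  split_ifs <;> simp_all [pathBouquetDist]

theorem treeNndDist_last :
    treeNndDist N d x (N - 1) =
      pathBouquetDist d (d / 2) (treeNndAnchor N d x) (d + 1) + (if x = N - 1 then 0 else 1) := by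
  unfold treeNndDist treeNndAnchor
  split_ifs <;> simp_all [pathBouquetDist]

theorem treeNndDist_lipschitz (h : d + 3 ≤ N) {a b : ℕ} (hab : TreeNndEdge N d a b) :
    treeNndDist N d x b ≤ treeNndDist N d x a + 1 ∧
      treeNndDist N d x a ≤ treeNndDist N d x b + 1 := by
  rcases hab with hab | hab | ⟨rfl, rfl⟩
  · rw [treeNndDist_of_ne_last (by omega), treeNndDist_of_ne_last (by omega)]
    have := pathBouquetDist_lipschitz (x := treeNndAnchor N d x) (Nat.div_le_self d 2)
      (Or.inl hab)
    omega
  · rw [treeNndDist_of_ne_last (by omega), treeNndDist_of_ne_last (by omega)]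
    have := pathBouquetDist_lipschitz (x := treeNndAnchor N d x) (Nat.div_le_self d 2)
      (Or.inr ⟨hab.1, hab.2.1⟩)
    omega
  · rw [treeNndDist_of_ne_last (y := d + 1) (by omega), treeNndDist_last]
    split_ifs <;> omega

theorem treeNndEdge_of_pathBouquetEdge {a b : ℕ} (hb : b < N - 1)
    (hab : PathBouquetEdge d (d / 2) a b) : TreeNndEdge N d a b := by
  unfold PathBouquetEdge at hab
  unfold TreeNndEdge
  omega

theorem treeNndDist_descent (h : d + 3 ≤ N) (hx : x < N) (hy : y < N) (hyx : y ≠ x) :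
    ∃ w < N, w ≠ y ∧ (TreeNndEdge N d w y ∨ TreeNndEdge N d y w) ∧
      treeNndDist N d x w < treeNndDist N d x y := by
  have hanchor : treeNndAnchor N d x < N - 1 := by unfold treeNndAnchor; split_ifs <;> omega
  by_cases hyl : y = N - 1
  · subst hyl
    refine ⟨d + 1, by omega, by omega, Or.inl (Or.inr (Or.inr ⟨rfl, rfl⟩)), ?_⟩
    rw [treeNndDist_of_ne_last (by omega), treeNndDist_last]
    simp [Ne.symm hyx]
  by_cases hya : y = treeNndAnchor N d x
  · have hxl : x = N - 1 := by unfold treeNndAnchor at hya; split_ifs at hya <;> omega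
    subst hxl
    refine ⟨N - 1, hx, Ne.symm hyl, Or.inr (Or.inr (Or.inr ⟨?_, rfl⟩)), ?_⟩
    · simpa [treeNndAnchor] using hya
    · rw [treeNndDist_of_ne_last hyl]
      simp [treeNndDist]
  -- descend in `P_{N-1,d,⌊d/2⌋}` from the anchor of `x`: the step stays below `N - 1`
  obtain ⟨w, hwN, hwy, hadj, hw⟩ :=
    pathBouquetDist_descent (Nat.div_le_self d 2) hanchor (by omega : y < N - 1) hya
  refine ⟨w, by omega, hwy, ?_, ?_⟩
  · exact hadj.imp (treeNndEdge_of_pathBouquetEdge (by omega))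
      (treeNndEdge_of_pathBouquetEdge hwN)
  · rw [treeNndDist_of_ne_last (by omega), treeNndDist_of_ne_last hyl]
    omega

theorem treeNnd_dist (h : d + 3 ≤ N) (u v : Fin N) :
    (treeNnd N d).dist u v = treeNndDist N d u v :=
  SimpleGraph.dist_fromRel_fin_eq_of_lipschitz_of_descent (TreeNndEdge N d) (treeNndDist N d)
    (fun _ => by simp [treeNndDist]) (fun _ _ _ => treeNndDist_lipschitz h)
    (fun _ _ hx hy hyx => treeNndDist_descent h hx hy hyx) u v

theorem treeNndDist_eq_pathBouquetDist (hx : x ≠ N - 1) (hy : y ≠ N - 1) :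
    treeNndDist N d x y = pathBouquetDist d (d / 2) x y := by
  simp [treeNndDist_of_ne_last hy, treeNndAnchor, hx]

theorem treeNndDist_last_add (h : d + 3 ≤ N) (hy : y ≠ N - 1) :
    treeNndDist N d (N - 1) y + 2 * (if y = d + 1 then 1 else 0) =
      pathBouquetDist d (d / 2) (N - 1) y + 1 := by
  rw [treeNndDist_of_ne_last hy]
  simp only [treeNndAnchor, if_true]
  split_ifs with hyd
  · subst hyd
    unfold pathBouquetDist spinePos Nat.dist
    split_ifs <;> omega
  · rw [pathBouquetDist_congr_leaf (x' := N - 1) (by omega) (by omega) hyd hy]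

theorem sum_treeNndDist_last_add {n : ℕ} (h : d + 3 ≤ n + 1) :
    ∑ j : Fin n, treeNndDist (n + 1) d n j + 2 =
      ∑ j : Fin n, pathBouquetDist d (d / 2) n j + n := by
  have hsum : ∑ j : Fin n,
      (treeNndDist (n + 1) d n j + 2 * (if (j : ℕ) = d + 1 then 1 else 0)) =
      ∑ j : Fin n, (pathBouquetDist d (d / 2) n j + 1) :=
    Finset.sum_congr rfl fun j _ => treeNndDist_last_add (N := n + 1) h (by omega)
  rw [Finset.sum_add_distrib, Finset.sum_add_distrib, ← Finset.mul_sum,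
    Fin.sum_univ_eq_sum_range (fun j => if j = d + 1 then 1 else 0) n, Finset.sum_ite_eq',
    if_pos (Finset.mem_range.2 (by omega))] at hsum
  simpa using hsum

end TreeNnd

theorem wiener_treeNnd {N d : ℕ} (h : d + 3 ≤ N) :
    wiener (treeNnd N d) = wiener (pathBouquet N d (d / 2)) + (N - 3) := by
  obtain ⟨n, rfl⟩ : ∃ n, N = n + 1 := ⟨N - 1, by omega⟩
  have hinner : ∑ i : Fin n, ∑ j : Fin n, (treeNnd (n + 1) d).dist i.castSucc j.castSucc =
      ∑ i : Fin n, ∑ j : Fin n, (pathBouquet (n + 1) d (d / 2)).dist i.castSucc j.castSucc := by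
    simp only [treeNnd_dist h, pathBouquet_dist (Nat.div_le_self d 2), Fin.val_castSucc]
    exact Finset.sum_congr rfl fun i _ => Finset.sum_congr rfl fun j _ =>
      treeNndDist_eq_pathBouquetDist (by omega) (by omega)
  have hrow : ∑ j : Fin n, (treeNnd (n + 1) d).dist (Fin.last n) j.castSucc + 2 =
      ∑ j : Fin n, (pathBouquet (n + 1) d (d / 2)).dist (Fin.last n) j.castSucc + n := by
    simpa only [treeNnd_dist h, pathBouquet_dist (Nat.div_le_self d 2), Fin.val_last,
      Fin.val_castSucc] using sum_treeNndDist_last_add h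
  unfold wiener
  rw [Fin.sum_sum_eq_castSucc_add_last_of_symm _ fun _ _ => SimpleGraph.dist_comm,
    Fin.sum_sum_eq_castSucc_add_last_of_symm _ fun _ _ => SimpleGraph.dist_comm,
    SimpleGraph.dist_self, SimpleGraph.dist_self, hinner, smul_eq_mul, smul_eq_mul]
  omega

theorem stmt17_general {N d : ℕ} (hN : 7 ≤ N) (hdN : d ≤ N - 3) :
    wiener (pathBouquet N d (d / 2)) < wiener (treeNnd N d) ∧
    wiener (treeNnd N d) = wiener (pathBouquet N d (d / 2)) + (N - 3) := by
  have h := wiener_treeNnd (N := N) (d := d) (by omega)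
  exact ⟨by omega, h⟩

theorem stmt17 {N d : ℕ} (hN : 7 ≤ N) (hd : 4 ≤ d) (hdN : d ≤ N - 3) :
    wiener (pathBouquet N d (d / 2)) < wiener (treeNnd N d) ∧
    wiener (treeNnd N d) = wiener (pathBouquet N d (d / 2)) + (N - 3) :=
  stmt17_general hN hdN
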